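/- arXiv:1903.00306 — 2 statements merged into one kernel-verified Lean document; each statement's English description precedes it below -/
import Mathlib

section
/- Let F¹ and F⁰ be finite-dimensional complex vector spaces with dim F¹ = n, dim F⁰ = k-1, and k-1 ≤ n, and let η : F¹ → F⁰ be a surjective linear map. Define Λ : ∧ⁿF¹ → ∧ⁿ(F¹ ⊕ F⁰) by Λ(e₁ ∧ ⋯ ∧ eₙ) = Σ_{1≤i₁<⋯<i_{k-1}≤n} e₁ ∧ ⋯ ∧ η(e_{i₁}) ∧ ⋯ ∧ η(e_{i_{k-1}}) ∧ ⋯ ∧ eₙ (where η is applied in the chosen k-1 slots, viewing F¹ and F⁰ as subspaces of F¹ ⊕ F⁰). Then Λ is a nonzero linear map. -/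
/-!
If `e i = e j`, the transposition of `i` and `j` permutes the index sets `s` and negates each
summand, so the sum equals its negative and vanishes: it is alternating in `e` and descends to
`⋀ⁿF¹`. For nonvanishing take `e` whose first `n - k + 1` vectors are a basis of `ker η` and whose
last `k - 1` vectors are mapped by `η` to a basis of `F⁰`: a summand applying `η` to a kernel vector
vanishes, and the one summand left is the wedge of a linearly independent family in `F¹ × F⁰`.
-/

open Finset

namespace AlternatingMap

variable {K M N P ι : Type*} [Field K] [AddCommGroup M] [Module K M] [AddCommGroup N] [Module K N]
  [AddCommGroup P] [Module K P] [Fintype ι] [DecidableEq ι]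

/-- The coefficient of `t ^ m` in `f ∘ (g + t • h)`. -/
def mixedCompMultilinear (f : N [⋀^ι]→ₗ[K] P) (g h : M →ₗ[K] N) (m : ℕ) :
    MultilinearMap K (fun _ : ι => M) P :=
  ∑ s ∈ powersetCard m univ, f.toMultilinearMap.compLinearMap fun i => if i ∈ s then h else g

theorem mixedCompMultilinear_apply (f : N [⋀^ι]→ₗ[K] P) (g h : M →ₗ[K] N) (m : ℕ)
    (v : ι → M) :
    mixedCompMultilinear f g h m v =
      ∑ s ∈ powersetCard m univ, f fun i => if i ∈ s then h (v i) else g (v i) := by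
  simp only [mixedCompMultilinear, _root_.sum_apply, MultilinearMap.compLinearMap_apply,
    coe_multilinearMap]
  exact sum_congr rfl fun s _ => congrArg f <| funext fun i => by split_ifs <;> rfl

theorem mixedCompMultilinear_eq_neg (f : N [⋀^ι]→ₗ[K] P) (g h : M →ₗ[K] N) (m : ℕ)
    {v : ι → M} {i j : ι} (hv : v i = v j) (hij : i ≠ j) :
    mixedCompMultilinear f g h m v = -mixedCompMultilinear f g h m v := by
  set τ := Equiv.swap i j
  have hτ : (powersetCard m univ).map (mapEmbedding τ.toEmbedding).toEmbedding =
      powersetCard m (univ : Finset ι) := by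
    rw [← powersetCard_map, map_univ_equiv]
  rw [mixedCompMultilinear_apply]
  conv_lhs => rw [← hτ, sum_map]
  rw [← sum_neg_distrib]
  refine sum_congr rfl fun s _ => ?_
  rw [← f.map_swap _ hij]
  congr 1
  ext k
  simp [τ, mem_map_equiv, Equiv.apply_swap_eq_self hv]

variable [NeZero (2 : K)]

def mixedComp (f : N [⋀^ι]→ₗ[K] P) (g h : M →ₗ[K] N) (m : ℕ) : M [⋀^ι]→ₗ[K] P where
  __ := mixedCompMultilinear f g h m
  map_eq_zero_of_eq' _ _ _ hv hij := by
    have h2 := eq_neg_iff_add_eq_zero.mp (mixedCompMultilinear_eq_neg f g h m hv hij)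
    rwa [← two_smul K, smul_eq_zero, or_iff_right two_ne_zero] at h2

theorem mixedComp_apply (f : N [⋀^ι]→ₗ[K] P) (g h : M →ₗ[K] N) (m : ℕ) (v : ι → M) :
    mixedComp f g h m v =
      ∑ s ∈ powersetCard m univ, f fun i => if i ∈ s then h (v i) else g (v i) :=
  mixedCompMultilinear_apply f g h m v

theorem mixedComp_inl_inr_append {V W : Type*} [AddCommGroup V] [Module K V] [AddCommGroup W]
    [Module K W] {l m : ℕ} (f : (V × W) [⋀^Fin (l + m)]→ₗ[K] P) (η : V →ₗ[K] W)
    (w : Fin l → V) (a : Fin m → V) (hw : ∀ i, η (w i) = 0) :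
    mixedComp f (LinearMap.inl K V W) (LinearMap.inr K V W ∘ₗ η) m (Fin.append w a) =
      f (Fin.append (LinearMap.inl K V W ∘ w) (LinearMap.inr K V W ∘ η ∘ a)) := by
  set s₀ : Finset (Fin (l + m)) := univ.map (Fin.natAddEmb l)
  have hs₀ : s₀ ∈ powersetCard m univ := mem_powersetCard_univ.mpr (by simp [s₀])
  rw [mixedComp_apply, sum_eq_single_of_mem s₀ hs₀]
  · congr 1
    ext i : 1
    refine Fin.addCases (fun j => ?_) (fun j => ?_) i
    · have hj : Fin.castAdd m j ∉ s₀ := by simp [s₀, Fin.ext_iff]; omega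
      simp [hj]
    · simp [s₀]
  · intro s hs hne
    obtain ⟨i, his, his₀⟩ : ∃ i ∈ s, i ∉ s₀ := by
      by_contra! hsub
      exact hne (eq_of_subset_of_card_le hsub (by simp_all [s₀]))
    refine f.map_coord_zero i ?_
    induction i using Fin.addCases with
    | left j => simp [his, hw]
    | right j => simp [s₀] at his₀

end AlternatingMap

theorem exteriorPower.ιMulti_ne_zero_of_linearIndependent {K E : Type*} [Field K]
    [AddCommGroup E] [Module K E] {n : ℕ} {v : Fin n → E} (hv : LinearIndependent K v) :
    exteriorPower.ιMulti K n v ≠ 0 := by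
  let s : Set.powersetCard (Fin n) n := ⟨univ, card_fin n⟩
  let σ := Equiv.ofBijective _ (Finite.injective_iff_bijective.mp
    (Set.powersetCard.ofFinEmbEquiv.symm s).injective)
  have h := (exteriorPower.ιMulti_family_linearIndependent_field n hv).ne_zero s
  change exteriorPower.ιMulti K n (v ∘ σ) ≠ 0 at h
  rw [AlternatingMap.map_perm] at h
  exact fun h0 => h (by rw [h0, smul_zero])

theorem LinearIndependent.append_inl_inr {R M N : Type*} [Ring R] [AddCommGroup M] [Module R M]
    [AddCommGroup N] [Module R N] {l m : ℕ} {u : Fin l → M} {v : Fin m → N}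
    (hu : LinearIndependent R u) (hv : LinearIndependent R v) :
    LinearIndependent R (Fin.append (LinearMap.inl R M N ∘ u) (LinearMap.inr R M N ∘ v)) := by
  have h : Fin.append (LinearMap.inl R M N ∘ u) (LinearMap.inr R M N ∘ v) =
      Sum.elim (LinearMap.inl R M N ∘ u) (LinearMap.inr R M N ∘ v) ∘ finSumFinEquiv.symm := by
    ext i : 1
    refine Fin.addCases (fun j => ?_) (fun j => ?_) i <;> simp
  rw [h]
  exact (linearIndependent_inl_union_inr' hu hv).comp _ finSumFinEquiv.symm.injective

open LinearMap in
/-- for a surjective linear map `η : F¹ → F⁰` with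
`dim F¹ = n`, `dim F⁰ = k - 1 ≤ n`, the linear map
`Λ : ⋀ⁿF¹ → ⋀ⁿ(F¹ ⊕ F⁰)` defined on wedges by
`Λ(e₁ ∧ ⋯ ∧ eₙ) = ∑_{i₁<⋯<i_{k-1}} e₁ ∧ ⋯ ∧ η(e_{i₁}) ∧ ⋯ ∧ η(e_{i_{k-1}}) ∧ ⋯ ∧ eₙ`
(applying `η` in the chosen `k-1` slots, viewing `F¹, F⁰` as the two factors of
`F¹ × F⁰`) is a nonzero linear map. -/
theorem stmt_1 (n k : ℕ) (hk : 2 ≤ k) (hkn : k - 1 ≤ n)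
    (F1 F0 : Type*) [AddCommGroup F1] [Module ℂ F1] [AddCommGroup F0] [Module ℂ F0]
    (hF1 : Module.finrank ℂ F1 = n) (hF0 : Module.finrank ℂ F0 = k - 1)
    (η : F1 →ₗ[ℂ] F0) (hsurj : Function.Surjective η) :
    ∃ Λ : (⋀[ℂ]^n F1) →ₗ[ℂ] (⋀[ℂ]^n (F1 × F0)),
      (∀ e : Fin n → F1,
        (Λ ⟨ExteriorAlgebra.ιMulti ℂ n e,
             ExteriorAlgebra.ιMulti_range ℂ n (Set.mem_range_self e)⟩ :
            ExteriorAlgebra ℂ (F1 × F0)) =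
          ∑ s ∈ Finset.powersetCard (k - 1) (Finset.univ : Finset (Fin n)),
            ExteriorAlgebra.ιMulti ℂ n
              (fun i => if i ∈ s then ((0 : F1), η (e i)) else (e i, (0 : F0)))) ∧
      Λ ≠ 0 := by
  obtain ⟨l, rfl⟩ := Nat.exists_eq_add_of_le' hkn
  let Φ := (exteriorPower.ιMulti ℂ (l + (k - 1))).mixedComp (inl ℂ F1 F0) (inr ℂ F1 F0 ∘ₗ η)
    (k - 1)
  refine ⟨exteriorPower.alternatingMapLinearEquiv Φ, fun e => ?_, fun hΛ => ?_⟩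
  · have h := congrArg Subtype.val (exteriorPower.alternatingMapLinearEquiv_apply_ιMulti Φ e)
    rwa [AlternatingMap.mixedComp_apply, Submodule.coe_sum] at h
  have : FiniteDimensional ℂ F1 := Module.finite_of_finrank_pos (by omega)
  have hker : Module.finrank ℂ (ker η) = l := by
    have := finrank_range_add_finrank_ker η
    rw [range_eq_top.mpr hsurj, finrank_top] at this
    omega
  obtain ⟨u, hu⟩ := exists_linearIndependent_of_le_finrank hF0.ge
  obtain ⟨w, hw⟩ := exists_linearIndependent_of_le_finrank hker.ge
  have ha : LinearIndependent ℂ (η ∘ (Function.surjInv hsurj ∘ u)) := by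
    rwa [← Function.comp_assoc, (Function.rightInverse_surjInv hsurj).comp_eq_id]
  have hind := (hw.map' _ (ker η).ker_subtype).append_inl_inr ha
  have hΦ := exteriorPower.alternatingMapLinearEquiv_apply_ιMulti Φ
    (Fin.append ((ker η).subtype ∘ w) (Function.surjInv hsurj ∘ u))
  rw [hΛ, LinearMap.zero_apply, AlternatingMap.mixedComp_inl_inr_append _ η ((ker η).subtype ∘ w)
    (Function.surjInv hsurj ∘ u) fun i => (w i).2] at hΦ
  exact exteriorPower.ιMulti_ne_zero_of_linearIndependent hind hΦ.symm
end

section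
/- Let a₁,...,a_{m-3} be pairwise distinct complex numbers with aᵢ ∉ {0,1}, and let d = m - m/r - 2 ≥ 1. Consider vectors u_i = (a_i² - a_i, a_i³ - a_i, ..., a_i^{d+1} - a_i) ∈ ℂ^d for 1 ≤ i ≤ m-3. Then any m - 3 - d = m/r - 1 of the standard coordinate functions form a coordinate system on the solution space {x ∈ ℂ^{m-3} : Σᵢ xᵢ uᵢ = 0}; equivalently, every d × d minor of the matrix with columns u_i obtained by deleting any m/r - 1 columns is nonzero. -/
open Matrix Polynomial Finset

lemma aux_det {d : ℕ} (b : Fin d → ℂ) (hbinj : Function.Injective b)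
    (hb0 : ∀ j, b j ≠ 0) (hb1 : ∀ j, b j ≠ 1) :
    (Matrix.of fun e j : Fin d => b j ^ ((e : ℕ) + 2) - b j).det ≠ 0 := by
  set p : Fin d → ℂ[X] := fun e => ∑ i ∈ Finset.range ((e : ℕ) + 1), X ^ i with hp
  have hmonic : ∀ e, (p e).Monic := fun e => monic_geom_sum_X (Nat.succ_ne_zero _)
  have hdeg : ∀ e : Fin d, (p e).natDegree = (e : ℕ) := by
    intro e
    refine le_antisymm ?_ ?_
    · refine natDegree_sum_le_of_forall_le _ _ fun i hi => ?_
      simpa [natDegree_X_pow] using Nat.lt_succ_iff.mp (Finset.mem_range.mp hi)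
    · apply le_natDegree_of_ne_zero
      simp [hp, finset_sum_coeff, coeff_X_pow]
  have hB : (Matrix.of fun e j : Fin d => b j ^ ((e : ℕ) + 2) - b j)
      = (Matrix.of fun e j : Fin d => (p e).eval (b j)) * Matrix.diagonal (fun j => b j * (b j - 1)) := by
    ext e j
    rw [Matrix.mul_diagonal]
    simp only [Matrix.of_apply, hp, eval_geom_sum]
    have := geom_sum_mul (b j) ((e : ℕ) + 1)
    symm
    calc (∑ i ∈ Finset.range ((e:ℕ)+1), b j ^ i) * (b j * (b j - 1))
        = ((∑ i ∈ Finset.range ((e:ℕ)+1), b j ^ i) * (b j - 1)) * b j := by ring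
      _ = (b j ^ ((e:ℕ)+1) - 1) * b j := by rw [this]
      _ = b j ^ ((e:ℕ)+2) - b j := by ring
  rw [hB, Matrix.det_mul, Matrix.det_diagonal]
  have hvdm : (Matrix.of fun e j : Fin d => (p e).eval (b j)).det ≠ 0 := by
    have := Matrix.det_eval_matrixOfPolynomials_eq_det_vandermonde b p
      hdeg hmonic
    have h2 : (Matrix.of fun e j : Fin d => (p e).eval (b j)) =
        (Matrix.of fun i j : Fin d => (p j).eval (b i))ᵀ := by
      ext i j; rfl
    rw [h2, Matrix.det_transpose, ← this]
    exact Matrix.det_vandermonde_ne_zero_iff.mpr hbinj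
  refine mul_ne_zero hvdm (Finset.prod_ne_zero_iff.mpr fun j _ => ?_)
  exact mul_ne_zero (hb0 j) (sub_ne_zero.mpr (hb1 j))


/-- with `d = m - m/r - 2 ≥ 1` and `a i` pairwise distinct,
∉ {0,1}, for the vectors `u i = (a i^2 - a i, …, a i^(d+1) - a i) ∈ ℂ^d`:
any `m/r - 1` of the coordinate functions form a coordinate system on the
solution space `{x : ∑ i, x i • u i = 0}` (the coordinate projection to those
`m/r - 1` coordinates is bijective on the kernel), and equivalently every
`d × d` minor of the matrix with columns `u i` is nonzero. -/
theorem stmt_11 (m r : ℕ) (hr : 0 < r) (hdvd : r ∣ m) (hmr : 2 ≤ m / r)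
    (d : ℕ) (hd : d = m - m / r - 2) (hd1 : 1 ≤ d)
    (a : Fin (m - 3) → ℂ) (hinj : Function.Injective a)
    (h0 : ∀ i, a i ≠ 0) (h1 : ∀ i, a i ≠ 1)
    (M : Matrix (Fin d) (Fin (m - 3)) ℂ)
    (hM : ∀ e i, M e i = a i ^ ((e : ℕ) + 2) - a i) :
    (∀ S : Finset (Fin (m - 3)), S.card = m / r - 1 →
      Function.Bijective
        (fun x : LinearMap.ker M.mulVecLin => fun i : S => (x : Fin (m - 3) → ℂ) i)) ∧
    (∀ g : Fin d → Fin (m - 3), Function.Injective g →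
      (Matrix.of fun e j : Fin d => M e (g j)).det ≠ 0) := by
  have hq2 : 2 ≤ m / r := hmr
  have hn : m - 3 = d + (m / r - 1) := by omega
  have part2 : ∀ g : Fin d → Fin (m - 3), Function.Injective g →
      (Matrix.of fun e j : Fin d => M e (g j)).det ≠ 0 := by
    intro g hg
    have hMg : (Matrix.of fun e j : Fin d => M e (g j))
        = Matrix.of fun e j : Fin d => (a ∘ g) j ^ ((e : ℕ) + 2) - (a ∘ g) j := by
      ext e j; simp [hM]
    rw [hMg]
    exact aux_det (a ∘ g) (hinj.comp hg) (fun j => h0 _) (fun j => h1 _)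
  refine ⟨?_, part2⟩
  intro S hS
  have hcompl : Sᶜ.card = d := by
    rw [Finset.card_compl, hS, Fintype.card_fin]; omega
  let E : (Sᶜ : Finset (Fin (m - 3))) ≃ Fin d := Sᶜ.equivFinOfCardEq hcompl
  let g : Fin d → Fin (m - 3) := fun k => (E.symm k : Fin (m - 3))
  have hg : Function.Injective g := fun k l h =>
    E.symm.injective (Subtype.ext h)
  have key : ∀ z : Fin (m - 3) → ℂ, z ∈ LinearMap.ker M.mulVecLin →
      (∀ i ∈ S, z i = 0) → z = 0 := by
    intro z hz hzS
    have hmv : M.mulVec z = 0 := by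
      simpa [Matrix.mulVecLin_apply] using hz
    have hy : (Matrix.of fun e j : Fin d => M e (g j)).mulVec (fun k => z (g k)) = 0 := by
      funext e
      have hrow : ∑ j, M e j * z j = 0 := by
        have := congrFun hmv e
        simpa [Matrix.mulVec, dotProduct] using this
      have hsum : ∑ k : Fin d, M e (g k) * z (g k) = ∑ j ∈ Sᶜ, M e j * z j := by
        rw [← Finset.sum_coe_sort (Sᶜ) (fun j => M e j * z j)]
        exact Equiv.sum_comp E.symm (fun x : {x // x ∈ Sᶜ} => M e x * z x)
      have hfull : ∑ j ∈ Sᶜ, M e j * z j = ∑ j, M e j * z j := by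
        apply Finset.sum_subset (Finset.subset_univ _)
        intro x _ hx
        have hxS : x ∈ S := by simpa using hx
        simp [hzS x hxS]
      simp only [Matrix.mulVec, dotProduct, Matrix.of_apply, Pi.zero_apply]
      rw [hsum, hfull, hrow]
    have hzero := Matrix.eq_zero_of_mulVec_eq_zero (part2 g hg) hy
    funext j
    by_cases hj : j ∈ S
    · exact hzS j hj
    · have hjc : j ∈ Sᶜ := Finset.mem_compl.mpr hj
      have hgj : g (E ⟨j, hjc⟩) = j := by simp [g]
      have := congrFun hzero (E ⟨j, hjc⟩)
      rwa [hgj] at this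
  have hinjproj : Function.Injective
      (fun x : LinearMap.ker M.mulVecLin => fun i : S => (x : Fin (m - 3) → ℂ) i) := by
    intro x y hxy
    apply Subtype.ext
    have hsub : ((x : Fin (m-3) → ℂ) - (y : Fin (m-3) → ℂ)) ∈ LinearMap.ker M.mulVecLin :=
      Submodule.sub_mem _ x.2 y.2
    have := key _ hsub (fun i hi => by
      have := congrFun hxy ⟨i, hi⟩
      simpa [sub_eq_zero] using this)
    exact sub_eq_zero.mp (by simpa using this)
  refine ⟨hinjproj, ?_⟩
  let Φ : LinearMap.ker M.mulVecLin →ₗ[ℂ] ({x // x ∈ S} → ℂ) :=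
    (LinearMap.funLeft ℂ ℂ (fun i : S => (i : Fin (m - 3)))).comp
      (LinearMap.ker M.mulVecLin).subtype
  have hΦ : Φ = (fun x : LinearMap.ker M.mulVecLin => fun i : S => (x : Fin (m - 3) → ℂ) i) := rfl
  have hΦinj : Function.Injective Φ := hinjproj
  have hrk : Module.finrank ℂ (LinearMap.ker M.mulVecLin) =
      Module.finrank ℂ ({x // x ∈ S} → ℂ) := by
    have hle : Module.finrank ℂ (LinearMap.ker M.mulVecLin) ≤
        Module.finrank ℂ ({x // x ∈ S} → ℂ) :=
      LinearMap.finrank_le_finrank_of_injective hΦinj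
    have hrn := LinearMap.finrank_range_add_finrank_ker M.mulVecLin
    have hdom : Module.finrank ℂ (Fin (m-3) → ℂ) = m - 3 := by
      simp
    have hrange : Module.finrank ℂ (LinearMap.range M.mulVecLin) ≤ d := by
      have := Submodule.finrank_le (LinearMap.range M.mulVecLin)
      simpa using this
    have hScard : Module.finrank ℂ ({x // x ∈ S} → ℂ) = S.card := by
      simp [Module.finrank_pi]
    rw [hdom] at hrn
    omega
  have := (LinearMap.injective_iff_surjective_of_finrank_eq_finrank hrk).mp hΦinj
  rwa [hΦ] at this
end
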